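/- arXiv:1303.2956 — 3 statements merged into one kernel-verified Lean document; each statement's English description precedes it below -/
import Mathlib

section
/- Let γ(s,t) be an arclength-parametrized inextensible flow of pseudo null curves in E⁴₁ with pseudo null Frenet frame {T, N, B₁, B₂}, curvatures k₁ = 1, k₂, k₃, flow ∂γ/∂t = α₁T + α₂N + α₃B₁ + α₄B₂ (so ∂α₁/∂s = α₄), and ψ₁ = ⟨∂N/∂t, B₁⟩. Then ∂²α₃/∂s² + ∂(α₂k₂)/∂s − ∂(α₄k₃)/∂s − (∂α₄/∂s)k₃ + (∂α₂/∂s)k₂ + α₁k₂ + 2α₃k₂k₃ − ψ₁ = 0. -/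
/-!
Formalization of inextensible flows of partially null / pseudo null curves in
Minkowski space-time `E⁴₁` (ℝ⁴ with signature (-,+,+,+)).
-/

noncomputable section

/-- The Minkowski bilinear form on `ℝ⁴` with signature `(-,+,+,+)`. -/
def mink (v w : Fin 4 → ℝ) : ℝ :=
  -(v 0 * w 0) + v 1 * w 1 + v 2 * w 2 + v 3 * w 3

/-- The Minkowski norm `‖v‖ = √|⟨v,v⟩|`. -/
def mnorm (v : Fin 4 → ℝ) : ℝ := Real.sqrt |mink v v|

/-!
By symmetry of second derivatives, `∂T/∂t = ∂/∂s (∂γ/∂t)`, which the Frenet equations expand in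
the frame; inextensibility `∂α₁/∂s = α₄` cancels its `T`-component. Since `N = ∂T/∂s`, the same
argument gives `∂N/∂t = ∂/∂s (∂T/∂t)`, and `ψ₁` is the `B₁`-coefficient of this vector, read off
with the orthogonality relations of the frame.
-/

section PartialDerivatives

variable {E : Type*} [NormedAddCommGroup E] [NormedSpace ℝ E]

theorem HasFDerivAt.hasDerivAt_partial_fst {F : ℝ × ℝ → E} {F' : ℝ × ℝ →L[ℝ] E} {s t : ℝ}
    (h : HasFDerivAt F F' (s, t)) : HasDerivAt (fun x => F (x, t)) (F' (1, 0)) s :=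
  h.comp_hasDerivAt s ((hasDerivAt_id s).prodMk (hasDerivAt_const s t))

theorem HasFDerivAt.hasDerivAt_partial_snd {F : ℝ × ℝ → E} {F' : ℝ × ℝ →L[ℝ] E} {s t : ℝ}
    (h : HasFDerivAt F F' (s, t)) : HasDerivAt (fun x => F (s, x)) (F' (0, 1)) t :=
  h.comp_hasDerivAt t ((hasDerivAt_const t s).prodMk (hasDerivAt_id t))

variable {n : WithTop ℕ∞} {f : ℝ → ℝ → E}

theorem ContDiff.deriv_partial_fst (hf : ContDiff ℝ n (fun p : ℝ × ℝ => f p.1 p.2))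
    (hn : n ≠ 0) (s t : ℝ) :
    deriv (fun x => f x t) s = fderiv ℝ (fun p : ℝ × ℝ => f p.1 p.2) (s, t) (1, 0) :=
  ((hf.differentiable hn (s, t)).hasFDerivAt.hasDerivAt_partial_fst).deriv

theorem ContDiff.differentiable_partial_fst (hf : ContDiff ℝ n (fun p : ℝ × ℝ => f p.1 p.2))
    (hn : n ≠ 0) (t : ℝ) : Differentiable ℝ (fun x => f x t) := fun s =>
  (hf.differentiable hn (s, t)).hasFDerivAt.hasDerivAt_partial_fst.differentiableAt

theorem ContDiff.differentiableAt_deriv_partial_fst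
    (hf : ContDiff ℝ n (fun p : ℝ × ℝ => f p.1 p.2)) (hn : 2 ≤ n) (s t : ℝ) :
    DifferentiableAt ℝ (fun y => deriv (fun x => f x t) y) s := by
  have hn1 : n ≠ 0 := (zero_lt_two.trans_le hn).ne'
  simp only [hf.deriv_partial_fst hn1]
  have hdf : Differentiable ℝ (fderiv ℝ fun p : ℝ × ℝ => f p.1 p.2) :=
    (hf.fderiv_right (m := 1) hn).differentiable one_ne_zero
  exact ((hdf (s, t)).hasFDerivAt.hasDerivAt_partial_fst.clm_apply
    (hasDerivAt_const s ((1 : ℝ), (0 : ℝ)))).differentiableAt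

theorem ContDiff.deriv_partial_comm (hf : ContDiff ℝ n (fun p : ℝ × ℝ => f p.1 p.2))
    (hn : 2 ≤ n) (s t : ℝ) :
    deriv (fun x => deriv (fun y => f y x) s) t = deriv (fun y => deriv (fun x => f y x) t) s := by
  set F := fun p : ℝ × ℝ => f p.1 p.2
  have hn1 : n ≠ 0 := (zero_lt_two.trans_le hn).ne'
  have hF' : HasFDerivAt (fderiv ℝ F) (fderiv ℝ (fderiv ℝ F) (s, t)) (s, t) :=
    ((hf.fderiv_right (m := 1) hn).differentiable one_ne_zero (s, t)).hasFDerivAt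
  have hsymm : IsSymmSndFDerivAt ℝ F (s, t) :=
    hf.contDiffAt.isSymmSndFDerivAt (by rwa [minSmoothness_of_isRCLikeNormedField])
  have hsnd (y x : ℝ) : deriv (fun x => f y x) x = fderiv ℝ F (y, x) (0, 1) :=
    ((hf.differentiable hn1 (y, x)).hasFDerivAt.hasDerivAt_partial_snd).deriv
  simp only [hf.deriv_partial_fst hn1, hsnd]
  rw [(hF'.hasDerivAt_partial_snd.clm_apply (hasDerivAt_const t ((1 : ℝ), (0 : ℝ)))).deriv,
    (hF'.hasDerivAt_partial_fst.clm_apply (hasDerivAt_const s ((0 : ℝ), (1 : ℝ)))).deriv]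
  simp only [map_zero, add_zero]
  exact hsymm _ _

end PartialDerivatives

section PseudoNullFrame

variable {E : Type*} [NormedAddCommGroup E] [NormedSpace ℝ E]

structure SatisfiesPseudoNullFrenet (k₁ k₂ k₃ : ℝ → ℝ) (T N B₁ B₂ : ℝ → E) : Prop where
  hasDerivAt_T (s : ℝ) : HasDerivAt T (k₁ s • N s) s
  hasDerivAt_N (s : ℝ) : HasDerivAt N (k₂ s • B₁ s) s
  hasDerivAt_B₁ (s : ℝ) : HasDerivAt B₁ (k₃ s • N s - k₂ s • B₂ s) s
  hasDerivAt_B₂ (s : ℝ) : HasDerivAt B₂ (-k₁ s • T s - k₃ s • B₁ s) s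

theorem SatisfiesPseudoNullFrenet.hasDerivAt_combination {k₁ k₂ k₃ : ℝ → ℝ} {T N B₁ B₂ : ℝ → E}
    (hF : SatisfiesPseudoNullFrenet k₁ k₂ k₃ T N B₁ B₂) {a b c d : ℝ → ℝ} {a' b' c' d' s : ℝ}
    (ha : HasDerivAt a a' s) (hb : HasDerivAt b b' s) (hc : HasDerivAt c c' s)
    (hd : HasDerivAt d d' s) :
    HasDerivAt (fun x => a x • T x + b x • N x + c x • B₁ x + d x • B₂ x)
      ((a' - d s * k₁ s) • T s + (a s * k₁ s + b' + c s * k₃ s) • N s +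
        (b s * k₂ s + c' - d s * k₃ s) • B₁ s + (d' - c s * k₂ s) • B₂ s) s := by
  refine ((((ha.smul (hF.hasDerivAt_T s)).add (hb.smul (hF.hasDerivAt_N s))).add
    (hc.smul (hF.hasDerivAt_B₁ s))).add (hd.smul (hF.hasDerivAt_B₂ s))).congr_deriv ?_
  module

theorem SatisfiesPseudoNullFrenet.of_deriv_eq {k₁ k₂ k₃ : ℝ → ℝ} {T N B₁ B₂ : ℝ → E}
    (hT : Differentiable ℝ T) (hN : Differentiable ℝ N) (hB₁ : Differentiable ℝ B₁)
    (hB₂ : Differentiable ℝ B₂) (hfr₁ : ∀ s, deriv T s = k₁ s • N s)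
    (hfr₂ : ∀ s, deriv N s = k₂ s • B₁ s) (hfr₃ : ∀ s, deriv B₁ s = k₃ s • N s - k₂ s • B₂ s)
    (hfr₄ : ∀ s, deriv B₂ s = -k₁ s • T s - k₃ s • B₁ s) :
    SatisfiesPseudoNullFrenet k₁ k₂ k₃ T N B₁ B₂ where
  hasDerivAt_T s := hfr₁ s ▸ (hT s).hasDerivAt
  hasDerivAt_N s := hfr₂ s ▸ (hN s).hasDerivAt
  hasDerivAt_B₁ s := hfr₃ s ▸ (hB₁ s).hasDerivAt
  hasDerivAt_B₂ s := hfr₄ s ▸ (hB₂ s).hasDerivAt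

theorem deriv_T_of_inextensible_flow {γ T N B₁ B₂ : ℝ → ℝ → E}
    {k₂ k₃ α₁ α₂ α₃ α₄ : ℝ → ℝ → ℝ} {n : WithTop ℕ∞} {y t : ℝ}
    (hγ : ContDiff ℝ n (fun p : ℝ × ℝ => γ p.1 p.2)) (hn : 2 ≤ n)
    (hframe : SatisfiesPseudoNullFrenet (fun _ => 1) (k₂ · t) (k₃ · t) (T · t) (N · t) (B₁ · t)
      (B₂ · t))
    (hT : ∀ x, T y x = deriv (fun z => γ z x) y)
    (hflow : ∀ z, deriv (fun x => γ z x) t =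
      α₁ z t • T z t + α₂ z t • N z t + α₃ z t • B₁ z t + α₄ z t • B₂ z t)
    (hα₁ : HasDerivAt (α₁ · t) (α₄ y t) y) (hα₂ : DifferentiableAt ℝ (α₂ · t) y)
    (hα₃ : DifferentiableAt ℝ (α₃ · t) y) (hα₄ : DifferentiableAt ℝ (α₄ · t) y) :
    deriv (fun x => T y x) t =
      (0 : ℝ) • T y t + (α₁ y t + deriv (α₂ · t) y + α₃ y t * k₃ y t) • N y t +
        (α₂ y t * k₂ y t + deriv (α₃ · t) y - α₄ y t * k₃ y t) • B₁ y t +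
        (deriv (α₄ · t) y - α₃ y t * k₂ y t) • B₂ y t := by
  rw [funext hT, hγ.deriv_partial_comm hn, funext hflow,
    (hframe.hasDerivAt_combination hα₁ hα₂.hasDerivAt hα₃.hasDerivAt hα₄.hasDerivAt).deriv]
  module

end PseudoNullFrame

theorem mink_combination_B₁ {T N B₁ B₂ : Fin 4 → ℝ} (a b c d : ℝ)
    (hTB₁ : mink T B₁ = 0) (hNB₁ : mink N B₁ = 0) (hB₁B₁ : mink B₁ B₁ = 1)
    (hB₁B₂ : mink B₁ B₂ = 0) :
    mink (a • T + b • N + c • B₁ + d • B₂) B₁ = c := by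
  simp only [mink, Pi.add_apply, Pi.smul_apply, smul_eq_mul] at *
  linear_combination a * hTB₁ + b * hNB₁ + c * hB₁B₁ + d * hB₁B₂

theorem pde_B1_component_pseudo_null_general
    (γ T N B₁ B₂ : ℝ → ℝ → (Fin 4 → ℝ))
    (k₁ k₂ k₃ α₁ α₂ α₃ α₄ : ℝ → ℝ → ℝ)
    (ψ₁ : ℝ → ℝ → ℝ)
    (hγsmooth : ContDiff ℝ (⊤ : ℕ∞) (fun p : ℝ × ℝ => γ p.1 p.2))
    (hTsmooth : ContDiff ℝ (⊤ : ℕ∞) (fun p : ℝ × ℝ => T p.1 p.2))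
    (hNsmooth : ContDiff ℝ (⊤ : ℕ∞) (fun p : ℝ × ℝ => N p.1 p.2))
    (hB₁smooth : ContDiff ℝ (⊤ : ℕ∞) (fun p : ℝ × ℝ => B₁ p.1 p.2))
    (hB₂smooth : ContDiff ℝ (⊤ : ℕ∞) (fun p : ℝ × ℝ => B₂ p.1 p.2))
    (hk₂smooth : ContDiff ℝ (⊤ : ℕ∞) (fun p : ℝ × ℝ => k₂ p.1 p.2))
    (hk₃smooth : ContDiff ℝ (⊤ : ℕ∞) (fun p : ℝ × ℝ => k₃ p.1 p.2))
    (hα₁smooth : ContDiff ℝ (⊤ : ℕ∞) (fun p : ℝ × ℝ => α₁ p.1 p.2))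
    (hα₂smooth : ContDiff ℝ (⊤ : ℕ∞) (fun p : ℝ × ℝ => α₂ p.1 p.2))
    (hα₃smooth : ContDiff ℝ (⊤ : ℕ∞) (fun p : ℝ × ℝ => α₃ p.1 p.2))
    (hα₄smooth : ContDiff ℝ (⊤ : ℕ∞) (fun p : ℝ × ℝ => α₄ p.1 p.2))
    (hB₁B₁ : ∀ s t : ℝ, mink (B₁ s t) (B₁ s t) = 1)
    (hTB₁ : ∀ s t : ℝ, mink (T s t) (B₁ s t) = 0)
    (hNB₁ : ∀ s t : ℝ, mink (N s t) (B₁ s t) = 0)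
    (hB₁B₂ : ∀ s t : ℝ, mink (B₁ s t) (B₂ s t) = 0)
    -- arclength parametrization and pseudo null Frenet equations (k₁ = 1)
    (hk₁ : ∀ s t : ℝ, k₁ s t = 1)
    (hT : ∀ s t : ℝ, T s t = deriv (fun x => γ x t) s)
    (hfr₁ : ∀ s t : ℝ, deriv (fun x => T x t) s = k₁ s t • N s t)
    (hfr₂ : ∀ s t : ℝ, deriv (fun x => N x t) s = k₂ s t • B₁ s t)
    (hfr₃ : ∀ s t : ℝ, deriv (fun x => B₁ x t) s = k₃ s t • N s t - k₂ s t • B₂ s t)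
    (hfr₄ : ∀ s t : ℝ, deriv (fun x => B₂ x t) s = -(k₁ s t) • T s t - k₃ s t • B₁ s t)
    (hflow : ∀ s t : ℝ, deriv (fun x => γ s x) t =
      α₁ s t • T s t + α₂ s t • N s t + α₃ s t • B₁ s t + α₄ s t • B₂ s t)
    -- inextensibility: ∂α₁/∂s = α₄
    (hinext : ∀ s t : ℝ, deriv (fun x => α₁ x t) s = α₄ s t)
    (hψ₁ : ∀ s t : ℝ, ψ₁ s t = mink (deriv (fun x => N s x) t) (B₁ s t)) :
    ∀ s t : ℝ,
      deriv (fun x => deriv (fun y => α₃ y t) x) s + deriv (fun x => α₂ x t * k₂ x t) s -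
      deriv (fun x => α₄ x t * k₃ x t) s - deriv (fun x => α₄ x t) s * k₃ s t +
      deriv (fun x => α₂ x t) s * k₂ s t + α₁ s t * k₂ s t +
      2 * α₃ s t * k₂ s t * k₃ s t - ψ₁ s t = 0 := by
  intro s t
  have hn : ((⊤ : ℕ∞) : WithTop ℕ∞) ≠ 0 := by simp
  have h2 : (2 : WithTop ℕ∞) ≤ (⊤ : ℕ∞) := WithTop.coe_le_coe.mpr le_top
  have hdiff {g : ℝ → ℝ → ℝ} (hg : ContDiff ℝ (⊤ : ℕ∞) (fun p : ℝ × ℝ => g p.1 p.2)) (y : ℝ) :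
      DifferentiableAt ℝ (fun x => g x t) y :=
    hg.differentiable_partial_fst hn t y
  have frame : SatisfiesPseudoNullFrenet (fun _ => 1) (k₂ · t) (k₃ · t) (T · t) (N · t)
      (B₁ · t) (B₂ · t) :=
    .of_deriv_eq (hTsmooth.differentiable_partial_fst hn t)
      (hNsmooth.differentiable_partial_fst hn t) (hB₁smooth.differentiable_partial_fst hn t)
      (hB₂smooth.differentiable_partial_fst hn t) (by simp [hfr₁, hk₁]) (hfr₂ · t) (hfr₃ · t)
      (by simp [hfr₄, hk₁])
  have hTt (y : ℝ) := deriv_T_of_inextensible_flow hγsmooth h2 frame (hT y) (hflow · t)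
    (hinext y t ▸ (hdiff hα₁smooth y).hasDerivAt) (hdiff hα₂smooth y) (hdiff hα₃smooth y)
    (hdiff hα₄smooth y)
  have hNt : deriv (fun x => N s x) t = deriv (fun y => deriv (fun x => T y x) t) s := by
    rw [← hTsmooth.deriv_partial_comm h2]
    simp only [hfr₁, hk₁, one_smul]
  have hb : HasDerivAt (fun y => α₁ y t + deriv (α₂ · t) y + α₃ y t * k₃ y t) _ s :=
    (((hdiff hα₁smooth s).add (hα₂smooth.differentiableAt_deriv_partial_fst h2 s t)).add
      ((hdiff hα₃smooth s).mul (hdiff hk₃smooth s))).hasDerivAt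
  have hc : HasDerivAt (fun y => α₂ y t * k₂ y t + deriv (α₃ · t) y - α₄ y t * k₃ y t)
      (deriv (fun x => α₂ x t * k₂ x t) s + deriv (fun x => deriv (fun y => α₃ y t) x) s -
        deriv (fun x => α₄ x t * k₃ x t) s) s :=
    (((hdiff hα₂smooth s).mul (hdiff hk₂smooth s)).hasDerivAt.add
      (hα₃smooth.differentiableAt_deriv_partial_fst h2 s t).hasDerivAt).sub
      ((hdiff hα₄smooth s).mul (hdiff hk₃smooth s)).hasDerivAt
  have hd : HasDerivAt (fun y => deriv (α₄ · t) y - α₃ y t * k₂ y t) _ s :=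
    ((hα₄smooth.differentiableAt_deriv_partial_fst h2 s t).sub
      ((hdiff hα₃smooth s).mul (hdiff hk₂smooth s))).hasDerivAt
  rw [hψ₁, hNt, funext hTt, (frame.hasDerivAt_combination (hasDerivAt_const s 0) hb hc hd).deriv,
    mink_combination_B₁ _ _ _ _ (hTB₁ s t) (hNB₁ s t) (hB₁B₁ s t) (hB₁B₂ s t)]
  ring

theorem pde_B1_component_pseudo_null
    (γ T N B₁ B₂ : ℝ → ℝ → (Fin 4 → ℝ))
    (k₁ k₂ k₃ α₁ α₂ α₃ α₄ : ℝ → ℝ → ℝ)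
    (ψ₁ : ℝ → ℝ → ℝ)
    (hγsmooth : ContDiff ℝ (⊤ : ℕ∞) (fun p : ℝ × ℝ => γ p.1 p.2))
    (hTsmooth : ContDiff ℝ (⊤ : ℕ∞) (fun p : ℝ × ℝ => T p.1 p.2))
    (hNsmooth : ContDiff ℝ (⊤ : ℕ∞) (fun p : ℝ × ℝ => N p.1 p.2))
    (hB₁smooth : ContDiff ℝ (⊤ : ℕ∞) (fun p : ℝ × ℝ => B₁ p.1 p.2))
    (hB₂smooth : ContDiff ℝ (⊤ : ℕ∞) (fun p : ℝ × ℝ => B₂ p.1 p.2))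
    (hk₂smooth : ContDiff ℝ (⊤ : ℕ∞) (fun p : ℝ × ℝ => k₂ p.1 p.2))
    (hk₃smooth : ContDiff ℝ (⊤ : ℕ∞) (fun p : ℝ × ℝ => k₃ p.1 p.2))
    (hα₁smooth : ContDiff ℝ (⊤ : ℕ∞) (fun p : ℝ × ℝ => α₁ p.1 p.2))
    (hα₂smooth : ContDiff ℝ (⊤ : ℕ∞) (fun p : ℝ × ℝ => α₂ p.1 p.2))
    (hα₃smooth : ContDiff ℝ (⊤ : ℕ∞) (fun p : ℝ × ℝ => α₃ p.1 p.2))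
    (hα₄smooth : ContDiff ℝ (⊤ : ℕ∞) (fun p : ℝ × ℝ => α₄ p.1 p.2))
    (hTT : ∀ s t : ℝ, mink (T s t) (T s t) = 1)
    (hB₁B₁ : ∀ s t : ℝ, mink (B₁ s t) (B₁ s t) = 1)
    (hNN : ∀ s t : ℝ, mink (N s t) (N s t) = 0)
    (hB₂B₂ : ∀ s t : ℝ, mink (B₂ s t) (B₂ s t) = 0)
    (hNB₂ : ∀ s t : ℝ, mink (N s t) (B₂ s t) = 1)
    (hTN : ∀ s t : ℝ, mink (T s t) (N s t) = 0)
    (hTB₁ : ∀ s t : ℝ, mink (T s t) (B₁ s t) = 0)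
    (hTB₂ : ∀ s t : ℝ, mink (T s t) (B₂ s t) = 0)
    (hNB₁ : ∀ s t : ℝ, mink (N s t) (B₁ s t) = 0)
    (hB₁B₂ : ∀ s t : ℝ, mink (B₁ s t) (B₂ s t) = 0)
    -- arclength parametrization and pseudo null Frenet equations (k₁ = 1)
    (hk₁ : ∀ s t : ℝ, k₁ s t = 1)
    (hT : ∀ s t : ℝ, T s t = deriv (fun x => γ x t) s)
    (hunit : ∀ s t : ℝ, mnorm (deriv (fun x => γ x t) s) = 1)
    (hfr₁ : ∀ s t : ℝ, deriv (fun x => T x t) s = k₁ s t • N s t)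
    (hfr₂ : ∀ s t : ℝ, deriv (fun x => N x t) s = k₂ s t • B₁ s t)
    (hfr₃ : ∀ s t : ℝ, deriv (fun x => B₁ x t) s = k₃ s t • N s t - k₂ s t • B₂ s t)
    (hfr₄ : ∀ s t : ℝ, deriv (fun x => B₂ x t) s = -(k₁ s t) • T s t - k₃ s t • B₁ s t)
    (hflow : ∀ s t : ℝ, deriv (fun x => γ s x) t =
      α₁ s t • T s t + α₂ s t • N s t + α₃ s t • B₁ s t + α₄ s t • B₂ s t)
    -- inextensibility: ∂α₁/∂s = α₄
    (hinext : ∀ s t : ℝ, deriv (fun x => α₁ x t) s = α₄ s t)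
    (hψ₁ : ∀ s t : ℝ, ψ₁ s t = mink (deriv (fun x => N s x) t) (B₁ s t)) :
    ∀ s t : ℝ,
      deriv (fun x => deriv (fun y => α₃ y t) x) s + deriv (fun x => α₂ x t * k₂ x t) s -
      deriv (fun x => α₄ x t * k₃ x t) s - deriv (fun x => α₄ x t) s * k₃ s t +
      deriv (fun x => α₂ x t) s * k₂ s t + α₁ s t * k₂ s t +
      2 * α₃ s t * k₂ s t * k₃ s t - ψ₁ s t = 0 :=
  pde_B1_component_pseudo_null_general γ T N B₁ B₂ k₁ k₂ k₃ α₁ α₂ α₃ α₄ ψ₁ hγsmooth hTsmooth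
    hNsmooth hB₁smooth hB₂smooth hk₂smooth hk₃smooth hα₁smooth hα₂smooth hα₃smooth hα₄smooth hB₁B₁
    hTB₁ hNB₁ hB₁B₂ hk₁ hT hfr₁ hfr₂ hfr₃ hfr₄ hflow hinext hψ₁
end
end

section
/- Let γ(s,t) be an arclength-parametrized inextensible flow of pseudo null curves in E⁴₁ with pseudo null Frenet frame {T, N, B₁, B₂}, curvatures k₁ = 1, k₂, k₃, flow ∂γ/∂t = α₁T + α₂N + α₃B₁ + α₄B₂ (so ∂α₁/∂s = α₄), and ψ₂ = ⟨∂N/∂t, B₂⟩. Then ∂²α₂/∂s² + ∂α₁/∂s + ∂(α₃k₃)/∂s + (∂α₃/∂s)k₃ + α₂k₂k₃ − α₄k₃² − ψ₂ = 0. -/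
/-!
Commuting `∂/∂s` with `∂/∂t` on `γ`, the Frenet equations and inextensibility
`∂α₁/∂s = α₄` give `∂T/∂t = μ₂ N + μ₃ B₁ + μ₄ B₂` with `μ₂ = α₁ + ∂α₂/∂s + α₃k₃` and
`μ₃ = α₂k₂ + ∂α₃/∂s - α₄k₃`. Commuting again on `N = ∂T/∂s`, `∂N/∂t = ∂/∂s (∂T/∂t)`, whose
`N`-component is `∂μ₂/∂s + μ₃k₃`. Pairing with `B₂` extracts exactly that component, since
`⟨N, B₂⟩ = 1` while `T`, `B₁` and the null vector `B₂` are orthogonal to `B₂`; so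
`ψ₂ = ∂μ₂/∂s + μ₃k₃`.
-/

noncomputable section

section

variable {E : Type*} [NormedAddCommGroup E] [NormedSpace ℝ E]

theorem HasFDerivAt.hasDerivAt_slice_left {f : ℝ × ℝ → E} {f' : ℝ × ℝ →L[ℝ] E} {s t : ℝ}
    (hf : HasFDerivAt f f' (s, t)) : HasDerivAt (fun x => f (x, t)) (f' (1, 0)) s :=
  hf.comp_hasDerivAt s ((hasDerivAt_id s).prodMk (hasDerivAt_const s t))

theorem HasFDerivAt.hasDerivAt_slice_right {f : ℝ × ℝ → E} {f' : ℝ × ℝ →L[ℝ] E} {s t : ℝ}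
    (hf : HasFDerivAt f f' (s, t)) : HasDerivAt (fun y => f (s, y)) (f' (0, 1)) t :=
  hf.comp_hasDerivAt t ((hasDerivAt_const t s).prodMk (hasDerivAt_id t))

theorem ContDiff.slice_left {F : ℝ → ℝ → E} {n : WithTop ℕ∞}
    (hF : ContDiff ℝ n fun p : ℝ × ℝ => F p.1 p.2) (t : ℝ) : ContDiff ℝ n (F · t) :=
  hF.comp (contDiff_id.prodMk contDiff_const)

theorem ContDiff.differentiable_slice_left {F : ℝ → ℝ → E} {n : WithTop ℕ∞}
    (hF : ContDiff ℝ n fun p : ℝ × ℝ => F p.1 p.2) (hn : n ≠ 0) (t : ℝ) :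
    Differentiable ℝ (F · t) :=
  (hF.slice_left t).differentiable hn

theorem ContDiff.differentiable_deriv_slice_left {F : ℝ → ℝ → E} {n : WithTop ℕ∞}
    (hF : ContDiff ℝ n fun p : ℝ × ℝ => F p.1 p.2) (hn : 2 ≤ n) (t : ℝ) :
    Differentiable ℝ (deriv (F · t)) :=
  ((hF.slice_left t).of_le hn).differentiable_deriv_two

theorem deriv_deriv_comm {F : ℝ → ℝ → E} (hF : ContDiff ℝ 2 fun p : ℝ × ℝ => F p.1 p.2)
    (s t : ℝ) :
    deriv (fun y => deriv (F · y) s) t = deriv (fun x => deriv (F x ·) t) s := by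
  set f : ℝ × ℝ → E := fun p => F p.1 p.2
  have hf : Differentiable ℝ f := hF.differentiable two_ne_zero
  have hf' : HasFDerivAt (fderiv ℝ f) (fderiv ℝ (fderiv ℝ f) (s, t)) (s, t) :=
    ((hF.fderiv_right (m := 1) (by norm_num)).differentiable one_ne_zero _).hasFDerivAt
  have left : (fun y => deriv (F · y) s) = fun y => fderiv ℝ f (s, y) (1, 0) :=
    funext fun y => (hf (s, y)).hasFDerivAt.hasDerivAt_slice_left.deriv
  have right : (fun x => deriv (F x ·) t) = fun x => fderiv ℝ f (x, t) (0, 1) :=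
    funext fun x => (hf (x, t)).hasFDerivAt.hasDerivAt_slice_right.deriv
  have d₁ : HasDerivAt (fun y => fderiv ℝ f (s, y) (1, 0))
      (fderiv ℝ (fderiv ℝ f) (s, t) (0, 1) (1, 0)) t :=
    (ContinuousLinearMap.apply ℝ E ((1 : ℝ), (0 : ℝ))).hasFDerivAt.comp_hasDerivAt t
      hf'.hasDerivAt_slice_right
  have d₂ : HasDerivAt (fun x => fderiv ℝ f (x, t) (0, 1))
      (fderiv ℝ (fderiv ℝ f) (s, t) (1, 0) (0, 1)) s :=
    (ContinuousLinearMap.apply ℝ E ((0 : ℝ), (1 : ℝ))).hasFDerivAt.comp_hasDerivAt s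
      hf'.hasDerivAt_slice_left
  rw [left, right, d₁.deriv, d₂.deriv]
  exact (hF.contDiffAt.isSymmSndFDerivAt (by simp)).eq (0, 1) (1, 0)

structure IsPseudoNullFrenet (T N B₁ B₂ : ℝ → E) (k₂ k₃ : ℝ → ℝ) : Prop where
  hasDerivAt_T : ∀ x, HasDerivAt T (N x) x
  hasDerivAt_N : ∀ x, HasDerivAt N (k₂ x • B₁ x) x
  hasDerivAt_B₁ : ∀ x, HasDerivAt B₁ (k₃ x • N x - k₂ x • B₂ x) x
  hasDerivAt_B₂ : ∀ x, HasDerivAt B₂ (-T x - k₃ x • B₁ x) x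

theorem IsPseudoNullFrenet.of_deriv {T N B₁ B₂ : ℝ → E} {k₂ k₃ : ℝ → ℝ}
    (dT : Differentiable ℝ T) (dN : Differentiable ℝ N) (dB₁ : Differentiable ℝ B₁)
    (dB₂ : Differentiable ℝ B₂) (hT : ∀ x, deriv T x = N x) (hN : ∀ x, deriv N x = k₂ x • B₁ x)
    (hB₁ : ∀ x, deriv B₁ x = k₃ x • N x - k₂ x • B₂ x)
    (hB₂ : ∀ x, deriv B₂ x = -T x - k₃ x • B₁ x) :
    IsPseudoNullFrenet T N B₁ B₂ k₂ k₃ where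
  hasDerivAt_T x := (dT x).hasDerivAt.congr_deriv (hT x)
  hasDerivAt_N x := (dN x).hasDerivAt.congr_deriv (hN x)
  hasDerivAt_B₁ x := (dB₁ x).hasDerivAt.congr_deriv (hB₁ x)
  hasDerivAt_B₂ x := (dB₂ x).hasDerivAt.congr_deriv (hB₂ x)

theorem IsPseudoNullFrenet.deriv_comb {T N B₁ B₂ : ℝ → E} {k₂ k₃ : ℝ → ℝ}
    (h : IsPseudoNullFrenet T N B₁ B₂ k₂ k₃) {a b c d : ℝ → ℝ} {x : ℝ}
    (ha : DifferentiableAt ℝ a x) (hb : DifferentiableAt ℝ b x)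
    (hc : DifferentiableAt ℝ c x) (hd : DifferentiableAt ℝ d x) :
    deriv (fun y => a y • T y + b y • N y + c y • B₁ y + d y • B₂ y) x =
      (deriv a x - d x) • T x + (a x + deriv b x + c x * k₃ x) • N x +
        (b x * k₂ x + deriv c x - d x * k₃ x) • B₁ x + (deriv d x - c x * k₂ x) • B₂ x := by
  refine ((((ha.hasDerivAt.smul (h.hasDerivAt_T x)).add
    (hb.hasDerivAt.smul (h.hasDerivAt_N x))).add (hc.hasDerivAt.smul (h.hasDerivAt_B₁ x))).add
    (hd.hasDerivAt.smul (h.hasDerivAt_B₂ x))).deriv.trans ?_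
  module

end

theorem mink_frame_comb_B₂ {T N B₁ B₂ : Fin 4 → ℝ} (hTB₂ : mink T B₂ = 0)
    (hNB₂ : mink N B₂ = 1) (hB₁B₂ : mink B₁ B₂ = 0) (hB₂B₂ : mink B₂ B₂ = 0) (a b c d : ℝ) :
    mink (a • T + b • N + c • B₁ + d • B₂) B₂ = b := by
  simp only [mink, Pi.add_apply, Pi.smul_apply, smul_eq_mul] at *
  linear_combination a * hTB₂ + b * hNB₂ + c * hB₁B₂ + d * hB₂B₂

theorem pde_N_component_pseudo_null_general
    (γ T N B₁ B₂ : ℝ → ℝ → (Fin 4 → ℝ))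
    (k₁ k₂ k₃ α₁ α₂ α₃ α₄ : ℝ → ℝ → ℝ)
    (ψ₂ : ℝ → ℝ → ℝ)
    (hγsmooth : ContDiff ℝ (⊤ : ℕ∞) (fun p : ℝ × ℝ => γ p.1 p.2))
    (hTsmooth : ContDiff ℝ (⊤ : ℕ∞) (fun p : ℝ × ℝ => T p.1 p.2))
    (hNsmooth : ContDiff ℝ (⊤ : ℕ∞) (fun p : ℝ × ℝ => N p.1 p.2))
    (hB₁smooth : ContDiff ℝ (⊤ : ℕ∞) (fun p : ℝ × ℝ => B₁ p.1 p.2))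
    (hB₂smooth : ContDiff ℝ (⊤ : ℕ∞) (fun p : ℝ × ℝ => B₂ p.1 p.2))
    (hk₂smooth : ContDiff ℝ (⊤ : ℕ∞) (fun p : ℝ × ℝ => k₂ p.1 p.2))
    (hk₃smooth : ContDiff ℝ (⊤ : ℕ∞) (fun p : ℝ × ℝ => k₃ p.1 p.2))
    (hα₁smooth : ContDiff ℝ (⊤ : ℕ∞) (fun p : ℝ × ℝ => α₁ p.1 p.2))
    (hα₂smooth : ContDiff ℝ (⊤ : ℕ∞) (fun p : ℝ × ℝ => α₂ p.1 p.2))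
    (hα₃smooth : ContDiff ℝ (⊤ : ℕ∞) (fun p : ℝ × ℝ => α₃ p.1 p.2))
    (hα₄smooth : ContDiff ℝ (⊤ : ℕ∞) (fun p : ℝ × ℝ => α₄ p.1 p.2))
    (hB₂B₂ : ∀ s t : ℝ, mink (B₂ s t) (B₂ s t) = 0)
    (hNB₂ : ∀ s t : ℝ, mink (N s t) (B₂ s t) = 1)
    (hTB₂ : ∀ s t : ℝ, mink (T s t) (B₂ s t) = 0)
    (hB₁B₂ : ∀ s t : ℝ, mink (B₁ s t) (B₂ s t) = 0)
    -- arclength parametrization and pseudo null Frenet equations (k₁ = 1)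
    (hk₁ : ∀ s t : ℝ, k₁ s t = 1)
    (hT : ∀ s t : ℝ, T s t = deriv (fun x => γ x t) s)
    (hfr₁ : ∀ s t : ℝ, deriv (fun x => T x t) s = k₁ s t • N s t)
    (hfr₂ : ∀ s t : ℝ, deriv (fun x => N x t) s = k₂ s t • B₁ s t)
    (hfr₃ : ∀ s t : ℝ, deriv (fun x => B₁ x t) s = k₃ s t • N s t - k₂ s t • B₂ s t)
    (hfr₄ : ∀ s t : ℝ, deriv (fun x => B₂ x t) s = -(k₁ s t) • T s t - k₃ s t • B₁ s t)
    (hflow : ∀ s t : ℝ, deriv (fun x => γ s x) t =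
      α₁ s t • T s t + α₂ s t • N s t + α₃ s t • B₁ s t + α₄ s t • B₂ s t)
    -- inextensibility: ∂α₁/∂s = α₄
    (hinext : ∀ s t : ℝ, deriv (fun x => α₁ x t) s = α₄ s t)
    (hψ₂ : ∀ s t : ℝ, ψ₂ s t = mink (deriv (fun x => N s x) t) (B₂ s t)) :
    ∀ s t : ℝ,
      deriv (fun x => deriv (fun y => α₂ y t) x) s + deriv (fun x => α₁ x t) s +
      deriv (fun x => α₃ x t * k₃ x t) s + deriv (fun x => α₃ x t) s * k₃ s t +
      α₂ s t * k₂ s t * k₃ s t - α₄ s t * (k₃ s t) ^ 2 - ψ₂ s t = 0 := by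
  intro s t
  have hn : ((⊤ : ℕ∞) : WithTop ℕ∞) ≠ 0 := by simp
  have h2 : (2 : WithTop ℕ∞) ≤ (⊤ : ℕ∞) := WithTop.coe_le_coe.mpr le_top
  have frenet : IsPseudoNullFrenet (T · t) (N · t) (B₁ · t) (B₂ · t) (k₂ · t) (k₃ · t) :=
    .of_deriv (hTsmooth.differentiable_slice_left hn t) (hNsmooth.differentiable_slice_left hn t)
      (hB₁smooth.differentiable_slice_left hn t) (hB₂smooth.differentiable_slice_left hn t)
      (fun x => by rw [hfr₁, hk₁, one_smul]) (hfr₂ · t) (hfr₃ · t)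
      (fun x => by rw [hfr₄, hk₁, neg_smul, one_smul])
  have dα₁ := hα₁smooth.differentiable_slice_left hn t
  have dα₂ := hα₂smooth.differentiable_slice_left hn t
  have dα₃ := hα₃smooth.differentiable_slice_left hn t
  have dα₄ := hα₄smooth.differentiable_slice_left hn t
  have dk₂ := hk₂smooth.differentiable_slice_left hn t
  have dk₃ := hk₃smooth.differentiable_slice_left hn t
  have dα₂' := hα₂smooth.differentiable_deriv_slice_left h2 t
  have dα₃' := hα₃smooth.differentiable_deriv_slice_left h2 t
  have dα₄' := hα₄smooth.differentiable_deriv_slice_left h2 t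
  set μ₂ : ℝ → ℝ := fun x => α₁ x t + deriv (α₂ · t) x + α₃ x t * k₃ x t
  set μ₃ : ℝ → ℝ := fun x => α₂ x t * k₂ x t + deriv (α₃ · t) x - α₄ x t * k₃ x t
  set μ₄ : ℝ → ℝ := fun x => deriv (α₄ · t) x - α₃ x t * k₂ x t
  -- the vanishing `T`-component is kept so that `hTt` has the shape `deriv_comb` differentiates
  have hTt (x : ℝ) :
      deriv (T x ·) t = (0 : ℝ) • T x t + μ₂ x • N x t + μ₃ x • B₁ x t + μ₄ x • B₂ x t := by
    calc deriv (T x ·) t = deriv (fun y => deriv (γ · y) x) t := by simp only [hT]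
      _ = deriv (fun u => deriv (γ u ·) t) x := deriv_deriv_comm (hγsmooth.of_le h2) x t
      _ = deriv (fun u => α₁ u t • T u t + α₂ u t • N u t + α₃ u t • B₁ u t + α₄ u t • B₂ u t)
          x := by simp only [hflow]
      _ = _ := by rw [frenet.deriv_comb (dα₁ x) (dα₂ x) (dα₃ x) (dα₄ x), hinext, sub_self]
  have hNt : deriv (N s ·) t =
      deriv (fun x => (0 : ℝ) • T x t + μ₂ x • N x t + μ₃ x • B₁ x t + μ₄ x • B₂ x t) s := by
    calc deriv (N s ·) t = deriv (fun y => deriv (T · y) s) t := by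
          simp only [hfr₁, hk₁, one_smul]
      _ = deriv (fun x => deriv (T x ·) t) s := deriv_deriv_comm (hTsmooth.of_le h2) s t
      _ = _ := by simp only [hTt]
  have hψ : ψ₂ s t = deriv μ₂ s + μ₃ s * k₃ s t := by
    rw [hψ₂, hNt, frenet.deriv_comb (differentiableAt_const 0) (by fun_prop) (by fun_prop)
      (by fun_prop), mink_frame_comb_B₂ (hTB₂ s t) (hNB₂ s t) (hB₁B₂ s t) (hB₂B₂ s t), zero_add]
  have hμ₂ : deriv μ₂ s = deriv (α₁ · t) s + deriv (deriv (α₂ · t)) s +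
      deriv (fun x => α₃ x t * k₃ x t) s := by
    simp only [μ₂]
    rw [deriv_fun_add (by fun_prop) (by fun_prop), deriv_fun_add (by fun_prop) (by fun_prop)]
  rw [hψ, hμ₂]
  ring

theorem pde_N_component_pseudo_null
    (γ T N B₁ B₂ : ℝ → ℝ → (Fin 4 → ℝ))
    (k₁ k₂ k₃ α₁ α₂ α₃ α₄ : ℝ → ℝ → ℝ)
    (ψ₂ : ℝ → ℝ → ℝ)
    (hγsmooth : ContDiff ℝ (⊤ : ℕ∞) (fun p : ℝ × ℝ => γ p.1 p.2))
    (hTsmooth : ContDiff ℝ (⊤ : ℕ∞) (fun p : ℝ × ℝ => T p.1 p.2))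
    (hNsmooth : ContDiff ℝ (⊤ : ℕ∞) (fun p : ℝ × ℝ => N p.1 p.2))
    (hB₁smooth : ContDiff ℝ (⊤ : ℕ∞) (fun p : ℝ × ℝ => B₁ p.1 p.2))
    (hB₂smooth : ContDiff ℝ (⊤ : ℕ∞) (fun p : ℝ × ℝ => B₂ p.1 p.2))
    (hk₂smooth : ContDiff ℝ (⊤ : ℕ∞) (fun p : ℝ × ℝ => k₂ p.1 p.2))
    (hk₃smooth : ContDiff ℝ (⊤ : ℕ∞) (fun p : ℝ × ℝ => k₃ p.1 p.2))
    (hα₁smooth : ContDiff ℝ (⊤ : ℕ∞) (fun p : ℝ × ℝ => α₁ p.1 p.2))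
    (hα₂smooth : ContDiff ℝ (⊤ : ℕ∞) (fun p : ℝ × ℝ => α₂ p.1 p.2))
    (hα₃smooth : ContDiff ℝ (⊤ : ℕ∞) (fun p : ℝ × ℝ => α₃ p.1 p.2))
    (hα₄smooth : ContDiff ℝ (⊤ : ℕ∞) (fun p : ℝ × ℝ => α₄ p.1 p.2))
    (hTT : ∀ s t : ℝ, mink (T s t) (T s t) = 1)
    (hB₁B₁ : ∀ s t : ℝ, mink (B₁ s t) (B₁ s t) = 1)
    (hNN : ∀ s t : ℝ, mink (N s t) (N s t) = 0)
    (hB₂B₂ : ∀ s t : ℝ, mink (B₂ s t) (B₂ s t) = 0)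
    (hNB₂ : ∀ s t : ℝ, mink (N s t) (B₂ s t) = 1)
    (hTN : ∀ s t : ℝ, mink (T s t) (N s t) = 0)
    (hTB₁ : ∀ s t : ℝ, mink (T s t) (B₁ s t) = 0)
    (hTB₂ : ∀ s t : ℝ, mink (T s t) (B₂ s t) = 0)
    (hNB₁ : ∀ s t : ℝ, mink (N s t) (B₁ s t) = 0)
    (hB₁B₂ : ∀ s t : ℝ, mink (B₁ s t) (B₂ s t) = 0)
    -- arclength parametrization and pseudo null Frenet equations (k₁ = 1)
    (hk₁ : ∀ s t : ℝ, k₁ s t = 1)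
    (hT : ∀ s t : ℝ, T s t = deriv (fun x => γ x t) s)
    (hunit : ∀ s t : ℝ, mnorm (deriv (fun x => γ x t) s) = 1)
    (hfr₁ : ∀ s t : ℝ, deriv (fun x => T x t) s = k₁ s t • N s t)
    (hfr₂ : ∀ s t : ℝ, deriv (fun x => N x t) s = k₂ s t • B₁ s t)
    (hfr₃ : ∀ s t : ℝ, deriv (fun x => B₁ x t) s = k₃ s t • N s t - k₂ s t • B₂ s t)
    (hfr₄ : ∀ s t : ℝ, deriv (fun x => B₂ x t) s = -(k₁ s t) • T s t - k₃ s t • B₁ s t)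
    (hflow : ∀ s t : ℝ, deriv (fun x => γ s x) t =
      α₁ s t • T s t + α₂ s t • N s t + α₃ s t • B₁ s t + α₄ s t • B₂ s t)
    -- inextensibility: ∂α₁/∂s = α₄
    (hinext : ∀ s t : ℝ, deriv (fun x => α₁ x t) s = α₄ s t)
    (hψ₂ : ∀ s t : ℝ, ψ₂ s t = mink (deriv (fun x => N s x) t) (B₂ s t)) :
    ∀ s t : ℝ,
      deriv (fun x => deriv (fun y => α₂ y t) x) s + deriv (fun x => α₁ x t) s +
      deriv (fun x => α₃ x t * k₃ x t) s + deriv (fun x => α₃ x t) s * k₃ s t +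
      α₂ s t * k₂ s t * k₃ s t - α₄ s t * (k₃ s t) ^ 2 - ψ₂ s t = 0 :=
  pde_N_component_pseudo_null_general γ T N B₁ B₂ k₁ k₂ k₃ α₁ α₂ α₃ α₄ ψ₂ hγsmooth hTsmooth hNsmooth
    hB₁smooth hB₂smooth hk₂smooth hk₃smooth hα₁smooth hα₂smooth hα₃smooth hα₄smooth hB₂B₂ hNB₂ hTB₂
    hB₁B₂ hk₁ hT hfr₁ hfr₂ hfr₃ hfr₄ hflow hinext hψ₂
end
end

section
/- Let γ(s,t) be an arclength-parametrized inextensible flow of pseudo null curves in E⁴₁ with pseudo null Frenet frame {T, N, B₁, B₂}, curvatures k₁ = 1, k₂, k₃, flow ∂γ/∂t = α₁T + α₂N + α₃B₁ + α₄B₂ (so ∂α₁/∂s = α₄), ψ₂ = ⟨∂N/∂t, B₂⟩ and ψ₃ = ⟨∂B₁/∂t, B₂⟩. Then the third curvature satisfies the evolution equation ∂k₃/∂t = ∂ψ₃/∂s − ∂α₃/∂s − α₂k₂ + α₄k₃ − ψ₂k₃. -/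
/-!
Since `k₃ = ⟨∂ₛB₁, B₂⟩` and `ψ₃ = ⟨∂ₜB₁, B₂⟩`, commuting `∂ₛ` with `∂ₜ` gives
`∂ₜk₃ - ∂ₛψ₃ = ⟨∂ₛB₁, ∂ₜB₂⟩ - ⟨∂ₜB₁, ∂ₛB₂⟩`. Differentiating the constant pairings of the frame in
`t` and inserting the Frenet equations turns the first term into `-ψ₂k₃` and the second into
`k₁⟨∂ₜT, B₁⟩`. Finally `∂ₜT = ∂ₛ∂ₜγ` is the `s`-derivative of the flow vector field, whose
`B₁`-component is `α₂k₂ + ∂ₛα₃ - α₄k₃`.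
-/

noncomputable section

theorem mink_comm (u v : Fin 4 → ℝ) : mink u v = mink v u := by
  unfold mink; ring

theorem mink_add_left (u v w : Fin 4 → ℝ) : mink (u + v) w = mink u w + mink v w := by
  simp only [mink, Pi.add_apply]; ring

theorem mink_sub_left (u v w : Fin 4 → ℝ) : mink (u - v) w = mink u w - mink v w := by
  simp only [mink, Pi.sub_apply]; ring

theorem mink_smul_left (a : ℝ) (u w : Fin 4 → ℝ) : mink (a • u) w = a * mink u w := by
  simp only [mink, Pi.smul_apply, smul_eq_mul]; ring

theorem mink_sub_right (u v w : Fin 4 → ℝ) : mink u (v - w) = mink u v - mink u w := by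
  rw [mink_comm, mink_sub_left, mink_comm v, mink_comm w]

theorem mink_smul_right (a : ℝ) (u w : Fin 4 → ℝ) : mink u (a • w) = a * mink u w := by
  rw [mink_comm, mink_smul_left, mink_comm]

theorem HasDerivAt.mink {u v : ℝ → Fin 4 → ℝ} {u' v' : Fin 4 → ℝ} {x : ℝ}
    (hu : HasDerivAt u u' x) (hv : HasDerivAt v v' x) :
    HasDerivAt (fun y => mink (u y) (v y)) (mink u' (v x) + mink (u x) v') x := by
  have hu' (i : Fin 4) := hasDerivAt_pi.mp hu i
  have hv' (i : Fin 4) := hasDerivAt_pi.mp hv i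
  refine ((((hu' 0).mul (hv' 0)).neg.add ((hu' 1).mul (hv' 1))).add
    ((hu' 2).mul (hv' 2))).add ((hu' 3).mul (hv' 3)) |>.congr_deriv ?_
  unfold _root_.mink; ring

section PartialDerivatives

variable {E : Type*} [NormedAddCommGroup E] [NormedSpace ℝ E] {f : ℝ → ℝ → E}
  {m n : WithTop ℕ∞}

theorem HasFDerivAt.hasDerivAt_slice_fst {G : ℝ × ℝ → E} {L : ℝ × ℝ →L[ℝ] E} {x y : ℝ}
    (hG : HasFDerivAt G L (x, y)) : HasDerivAt (fun a => G (a, y)) (L (1, 0)) x :=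
  hG.comp_hasDerivAt x ((hasDerivAt_id x).prodMk (hasDerivAt_const x y))

theorem HasFDerivAt.hasDerivAt_slice_snd {G : ℝ × ℝ → E} {L : ℝ × ℝ →L[ℝ] E} {x y : ℝ}
    (hG : HasFDerivAt G L (x, y)) : HasDerivAt (fun b => G (x, b)) (L (0, 1)) y :=
  hG.comp_hasDerivAt y ((hasDerivAt_const y x).prodMk (hasDerivAt_id y))

theorem hasDerivAt_deriv_fst_of_differentiable
    (hf : Differentiable ℝ (fun p : ℝ × ℝ => f p.1 p.2)) (x y : ℝ) :
    HasDerivAt (fun a => f a y) (deriv (fun a => f a y) x) x :=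
  (hf (x, y)).hasFDerivAt.hasDerivAt_slice_fst.differentiableAt.hasDerivAt

theorem hasDerivAt_deriv_snd_of_differentiable
    (hf : Differentiable ℝ (fun p : ℝ × ℝ => f p.1 p.2)) (x y : ℝ) :
    HasDerivAt (fun b => f x b) (deriv (fun b => f x b) y) y :=
  (hf (x, y)).hasFDerivAt.hasDerivAt_slice_snd.differentiableAt.hasDerivAt

theorem ContDiff.contDiff_deriv_fst (hf : ContDiff ℝ n (fun p : ℝ × ℝ => f p.1 p.2))
    (hmn : m + 1 ≤ n) : ContDiff ℝ m (fun p : ℝ × ℝ => deriv (fun a => f a p.2) p.1) := by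
  have hdiff := hf.differentiable (ne_bot_of_le_ne_bot (by simp) hmn)
  convert (hf.fderiv_right hmn).clm_apply (contDiff_const (c := ((1 : ℝ), (0 : ℝ)))) using 2
  exact (hdiff _).hasFDerivAt.hasDerivAt_slice_fst.deriv

theorem ContDiff.contDiff_deriv_snd (hf : ContDiff ℝ n (fun p : ℝ × ℝ => f p.1 p.2))
    (hmn : m + 1 ≤ n) : ContDiff ℝ m (fun p : ℝ × ℝ => deriv (fun b => f p.1 b) p.2) := by
  have hdiff := hf.differentiable (ne_bot_of_le_ne_bot (by simp) hmn)
  convert (hf.fderiv_right hmn).clm_apply (contDiff_const (c := ((0 : ℝ), (1 : ℝ)))) using 2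
  exact (hdiff _).hasFDerivAt.hasDerivAt_slice_snd.deriv

theorem ContDiff.deriv_deriv_comm (hf : ContDiff ℝ n (fun p : ℝ × ℝ => f p.1 p.2)) (hn : 2 ≤ n)
    (x y : ℝ) :
    deriv (fun a => deriv (fun b => f a b) y) x = deriv (fun b => deriv (fun a => f a b) x) y := by
  set F := fun p : ℝ × ℝ => f p.1 p.2
  have h11 : (1 : WithTop ℕ∞) + 1 ≤ n := by simpa [one_add_one_eq_two] using hn
  have hdiff := hf.differentiable (ne_bot_of_le_ne_bot (by simp) h11)
  have hdiff2 := (hf.fderiv_right h11).differentiable one_ne_zero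
  have e1 : (fun a => deriv (fun b => f a b) y) = fun a => fderiv ℝ F (a, y) (0, 1) :=
    funext fun a => (hdiff (a, y)).hasFDerivAt.hasDerivAt_slice_snd.deriv
  have e2 : (fun b => deriv (fun a => f a b) x) = fun b => fderiv ℝ F (x, b) (1, 0) :=
    funext fun b => (hdiff (x, b)).hasFDerivAt.hasDerivAt_slice_fst.deriv
  have hF' (v : ℝ × ℝ) : HasFDerivAt (fun p => fderiv ℝ F p v)
      ((fderiv ℝ (fderiv ℝ F) (x, y)).flip v) (x, y) := by
    simpa using (hdiff2 (x, y)).hasFDerivAt.clm_apply (hasFDerivAt_const v (x, y))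
  rw [e1, e2, (hF' (0, 1)).hasDerivAt_slice_fst.deriv, (hF' (1, 0)).hasDerivAt_slice_snd.deriv]
  exact hf.contDiffAt.isSymmSndFDerivAt (by simpa using hn) (1, 0) (0, 1)

end PartialDerivatives

section FamiliesOfVectors

variable {u v : ℝ → ℝ → Fin 4 → ℝ}

theorem mink_deriv_snd_add_mink_deriv_snd_eq_zero {c : ℝ}
    (hu : Differentiable ℝ (fun p : ℝ × ℝ => u p.1 p.2))
    (hv : Differentiable ℝ (fun p : ℝ × ℝ => v p.1 p.2))
    (huv : ∀ x y, mink (u x y) (v x y) = c) (x y : ℝ) :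
    mink (deriv (fun b => u x b) y) (v x y) + mink (u x y) (deriv (fun b => v x b) y) = 0 := by
  have h := ((hasDerivAt_deriv_snd_of_differentiable hu x y).mink
    (hasDerivAt_deriv_snd_of_differentiable hv x y)).deriv
  simp only [huv, deriv_const'] at h
  exact h.symm

theorem mink_deriv_snd_self_eq_zero {c : ℝ} (hu : Differentiable ℝ (fun p : ℝ × ℝ => u p.1 p.2))
    (huu : ∀ x y, mink (u x y) (u x y) = c) (x y : ℝ) :
    mink (deriv (fun b => u x b) y) (u x y) = 0 := by
  have h := mink_deriv_snd_add_mink_deriv_snd_eq_zero hu hu huu x y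
  rw [mink_comm (u x y)] at h
  linarith

theorem deriv_mink_deriv_fst_sub_deriv_mink_deriv_snd {n : WithTop ℕ∞}
    (hu : ContDiff ℝ n (fun p : ℝ × ℝ => u p.1 p.2)) (hn : 2 ≤ n)
    (hv : Differentiable ℝ (fun p : ℝ × ℝ => v p.1 p.2)) (x y : ℝ) :
    deriv (fun b => mink (deriv (fun a => u a b) x) (v x b)) y
        - deriv (fun a => mink (deriv (fun b => u a b) y) (v a y)) x
      = mink (deriv (fun a => u a y) x) (deriv (fun b => v x b) y)
        - mink (deriv (fun b => u x b) y) (deriv (fun a => v a y) x) := by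
  have h11 : (1 : WithTop ℕ∞) + 1 ≤ n := by simpa [one_add_one_eq_two] using hn
  have hsu := hasDerivAt_deriv_snd_of_differentiable (f := fun a b => deriv (fun a' => u a' b) a)
    ((hu.contDiff_deriv_fst h11).differentiable one_ne_zero) x y
  have htu := hasDerivAt_deriv_fst_of_differentiable (f := fun a b => deriv (fun b' => u a b') b)
    ((hu.contDiff_deriv_snd h11).differentiable one_ne_zero) x y
  rw [(hsu.mink (hasDerivAt_deriv_snd_of_differentiable hv x y)).deriv,
    (htu.mink (hasDerivAt_deriv_fst_of_differentiable hv x y)).deriv, hu.deriv_deriv_comm hn]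
  ring

end FamiliesOfVectors

theorem mink_deriv_frenet_combination_B₁ {T N B₁ B₂ : ℝ → Fin 4 → ℝ} {a₁ a₂ a₃ a₄ : ℝ → ℝ}
    {k₁ k₂ k₃ s : ℝ} (hT : HasDerivAt T (k₁ • N s) s) (hN : HasDerivAt N (k₂ • B₁ s) s)
    (hB₁ : HasDerivAt B₁ (k₃ • N s - k₂ • B₂ s) s)
    (hB₂ : HasDerivAt B₂ (-k₁ • T s - k₃ • B₁ s) s)
    (ha₁ : DifferentiableAt ℝ a₁ s) (ha₂ : DifferentiableAt ℝ a₂ s)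
    (ha₃ : DifferentiableAt ℝ a₃ s) (ha₄ : DifferentiableAt ℝ a₄ s)
    (hTB₁ : mink (T s) (B₁ s) = 0) (hNB₁ : mink (N s) (B₁ s) = 0)
    (hB₁B₁ : mink (B₁ s) (B₁ s) = 1) (hB₁B₂ : mink (B₁ s) (B₂ s) = 0) :
    mink (deriv (fun x => a₁ x • T x + a₂ x • N x + a₃ x • B₁ x + a₄ x • B₂ x) s) (B₁ s)
      = a₂ s * k₂ + deriv a₃ s - a₄ s * k₃ := by
  have hW : HasDerivAt (fun x => a₁ x • T x + a₂ x • N x + a₃ x • B₁ x + a₄ x • B₂ x) _ s :=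
    (((ha₁.hasDerivAt.smul hT).add (ha₂.hasDerivAt.smul hN)).add
      (ha₃.hasDerivAt.smul hB₁)).add (ha₄.hasDerivAt.smul hB₂)
  rw [hW.deriv]
  simp only [mink_add_left, mink_sub_left, mink_smul_left, mink_comm (B₂ s), hTB₁, hNB₁, hB₁B₁,
    hB₁B₂]
  ring

theorem mink_deriv_snd_tangent_B₁ {γ T N B₁ B₂ : ℝ → ℝ → Fin 4 → ℝ}
    {k₁ k₂ k₃ α₁ α₂ α₃ α₄ : ℝ → ℝ → ℝ} {n : WithTop ℕ∞}
    (hγ : ContDiff ℝ n (fun p : ℝ × ℝ => γ p.1 p.2)) (hn : 2 ≤ n)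
    (hTd : Differentiable ℝ (fun p : ℝ × ℝ => T p.1 p.2))
    (hNd : Differentiable ℝ (fun p : ℝ × ℝ => N p.1 p.2))
    (hB₁d : Differentiable ℝ (fun p : ℝ × ℝ => B₁ p.1 p.2))
    (hB₂d : Differentiable ℝ (fun p : ℝ × ℝ => B₂ p.1 p.2))
    (hα₁ : Differentiable ℝ (fun p : ℝ × ℝ => α₁ p.1 p.2))
    (hα₂ : Differentiable ℝ (fun p : ℝ × ℝ => α₂ p.1 p.2))
    (hα₃ : Differentiable ℝ (fun p : ℝ × ℝ => α₃ p.1 p.2))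
    (hα₄ : Differentiable ℝ (fun p : ℝ × ℝ => α₄ p.1 p.2))
    (hT : ∀ s t, T s t = deriv (fun x => γ x t) s)
    (hfr₁ : ∀ s t, deriv (fun x => T x t) s = k₁ s t • N s t)
    (hfr₂ : ∀ s t, deriv (fun x => N x t) s = k₂ s t • B₁ s t)
    (hfr₃ : ∀ s t, deriv (fun x => B₁ x t) s = k₃ s t • N s t - k₂ s t • B₂ s t)
    (hfr₄ : ∀ s t, deriv (fun x => B₂ x t) s = -(k₁ s t) • T s t - k₃ s t • B₁ s t)
    (hflow : ∀ s t, deriv (fun x => γ s x) t =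
      α₁ s t • T s t + α₂ s t • N s t + α₃ s t • B₁ s t + α₄ s t • B₂ s t)
    {s t : ℝ} (hTB₁ : mink (T s t) (B₁ s t) = 0) (hNB₁ : mink (N s t) (B₁ s t) = 0)
    (hB₁B₁ : mink (B₁ s t) (B₁ s t) = 1) (hB₁B₂ : mink (B₁ s t) (B₂ s t) = 0) :
    mink (deriv (fun y => T s y) t) (B₁ s t)
      = α₂ s t * k₂ s t + deriv (fun x => α₃ x t) s - α₄ s t * k₃ s t := by
  have hTt : deriv (fun y => T s y) t = deriv (fun x => deriv (fun y => γ x y) t) s := by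
    rw [show (fun y => T s y) = fun y => deriv (fun x => γ x y) s from funext (hT s),
      hγ.deriv_deriv_comm hn]
  rw [hTt, show (fun x => deriv (fun y => γ x y) t) = _ from funext (hflow · t)]
  exact mink_deriv_frenet_combination_B₁
    (hfr₁ s t ▸ hasDerivAt_deriv_fst_of_differentiable hTd s t)
    (hfr₂ s t ▸ hasDerivAt_deriv_fst_of_differentiable hNd s t)
    (hfr₃ s t ▸ hasDerivAt_deriv_fst_of_differentiable hB₁d s t)
    (hfr₄ s t ▸ hasDerivAt_deriv_fst_of_differentiable hB₂d s t)
    (hasDerivAt_deriv_fst_of_differentiable hα₁ s t).differentiableAt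
    (hasDerivAt_deriv_fst_of_differentiable hα₂ s t).differentiableAt
    (hasDerivAt_deriv_fst_of_differentiable hα₃ s t).differentiableAt
    (hasDerivAt_deriv_fst_of_differentiable hα₄ s t).differentiableAt
    hTB₁ hNB₁ hB₁B₁ hB₁B₂

theorem curvature_evolution_k3_pseudo_null_general
    (γ T N B₁ B₂ : ℝ → ℝ → (Fin 4 → ℝ))
    (k₁ k₂ k₃ α₁ α₂ α₃ α₄ : ℝ → ℝ → ℝ)
    (ψ₂ ψ₃ : ℝ → ℝ → ℝ)
    (hγsmooth : ContDiff ℝ (⊤ : ℕ∞) (fun p : ℝ × ℝ => γ p.1 p.2))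
    (hTsmooth : ContDiff ℝ (⊤ : ℕ∞) (fun p : ℝ × ℝ => T p.1 p.2))
    (hNsmooth : ContDiff ℝ (⊤ : ℕ∞) (fun p : ℝ × ℝ => N p.1 p.2))
    (hB₁smooth : ContDiff ℝ (⊤ : ℕ∞) (fun p : ℝ × ℝ => B₁ p.1 p.2))
    (hB₂smooth : ContDiff ℝ (⊤ : ℕ∞) (fun p : ℝ × ℝ => B₂ p.1 p.2))
    (hα₁smooth : ContDiff ℝ (⊤ : ℕ∞) (fun p : ℝ × ℝ => α₁ p.1 p.2))
    (hα₂smooth : ContDiff ℝ (⊤ : ℕ∞) (fun p : ℝ × ℝ => α₂ p.1 p.2))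
    (hα₃smooth : ContDiff ℝ (⊤ : ℕ∞) (fun p : ℝ × ℝ => α₃ p.1 p.2))
    (hα₄smooth : ContDiff ℝ (⊤ : ℕ∞) (fun p : ℝ × ℝ => α₄ p.1 p.2))
    (hB₁B₁ : ∀ s t : ℝ, mink (B₁ s t) (B₁ s t) = 1)
    (hB₂B₂ : ∀ s t : ℝ, mink (B₂ s t) (B₂ s t) = 0)
    (hNB₂ : ∀ s t : ℝ, mink (N s t) (B₂ s t) = 1)
    (hTB₁ : ∀ s t : ℝ, mink (T s t) (B₁ s t) = 0)
    (hNB₁ : ∀ s t : ℝ, mink (N s t) (B₁ s t) = 0)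
    (hB₁B₂ : ∀ s t : ℝ, mink (B₁ s t) (B₂ s t) = 0)
    -- arclength parametrization and pseudo null Frenet equations (k₁ = 1)
    (hk₁ : ∀ s t : ℝ, k₁ s t = 1)
    (hT : ∀ s t : ℝ, T s t = deriv (fun x => γ x t) s)
    (hfr₁ : ∀ s t : ℝ, deriv (fun x => T x t) s = k₁ s t • N s t)
    (hfr₂ : ∀ s t : ℝ, deriv (fun x => N x t) s = k₂ s t • B₁ s t)
    (hfr₃ : ∀ s t : ℝ, deriv (fun x => B₁ x t) s = k₃ s t • N s t - k₂ s t • B₂ s t)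
    (hfr₄ : ∀ s t : ℝ, deriv (fun x => B₂ x t) s = -(k₁ s t) • T s t - k₃ s t • B₁ s t)
    (hflow : ∀ s t : ℝ, deriv (fun x => γ s x) t =
      α₁ s t • T s t + α₂ s t • N s t + α₃ s t • B₁ s t + α₄ s t • B₂ s t)
    (hψ₂ : ∀ s t : ℝ, ψ₂ s t = mink (deriv (fun x => N s x) t) (B₂ s t))
    (hψ₃ : ∀ s t : ℝ, ψ₃ s t = mink (deriv (fun x => B₁ s x) t) (B₂ s t)) :
    ∀ s t : ℝ, deriv (fun x => k₃ s x) t =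
      deriv (fun x => ψ₃ x t) s - deriv (fun x => α₃ x t) s - α₂ s t * k₂ s t +
      α₄ s t * k₃ s t - ψ₂ s t * k₃ s t := by
  intro s t
  have h0 : ((⊤ : ℕ∞) : WithTop ℕ∞) ≠ 0 := WithTop.coe_ne_zero.mpr ENat.top_ne_zero
  have h2 : (2 : WithTop ℕ∞) ≤ (⊤ : ℕ∞) := WithTop.coe_le_coe.mpr le_top
  have hTd := hTsmooth.differentiable h0
  have hNd := hNsmooth.differentiable h0
  have hB₁d := hB₁smooth.differentiable h0
  have hB₂d := hB₂smooth.differentiable h0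
  have hk₃ : (fun y => k₃ s y) = fun y => mink (deriv (fun x => B₁ x y) s) (B₂ s y) := by
    funext y
    rw [hfr₃, mink_sub_left, mink_smul_left, mink_smul_left, hNB₂, hB₂B₂]
    ring
  have hB₂t := mink_deriv_snd_self_eq_zero hB₂d hB₂B₂ s t
  have hNt := mink_deriv_snd_add_mink_deriv_snd_eq_zero hNd hB₂d hNB₂ s t
  have hB₁t := mink_deriv_snd_self_eq_zero hB₁d hB₁B₁ s t
  have hTt := mink_deriv_snd_add_mink_deriv_snd_eq_zero hTd hB₁d hTB₁ s t
  rw [mink_deriv_snd_tangent_B₁ hγsmooth h2 hTd hNd hB₁d hB₂d (hα₁smooth.differentiable h0)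
    (hα₂smooth.differentiable h0) (hα₃smooth.differentiable h0) (hα₄smooth.differentiable h0)
    hT hfr₁ hfr₂ hfr₃ hfr₄ hflow (hTB₁ s t) (hNB₁ s t) (hB₁B₁ s t) (hB₁B₂ s t)] at hTt
  have hcomm := deriv_mink_deriv_fst_sub_deriv_mink_deriv_snd hB₁smooth h2 hB₂d s t
  rw [hfr₃, hfr₄, hk₁, mink_sub_left, mink_smul_left, mink_smul_left, mink_sub_right,
    mink_smul_right, mink_smul_right, mink_comm (B₂ s t), mink_comm _ (T s t)] at hcomm
  rw [hk₃, show (fun x => ψ₃ x t) = _ from funext (hψ₃ · t), hψ₂]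
  linear_combination hcomm + k₃ s t * hNt - k₂ s t * hB₂t + k₃ s t * hB₁t + hTt

theorem curvature_evolution_k3_pseudo_null
    (γ T N B₁ B₂ : ℝ → ℝ → (Fin 4 → ℝ))
    (k₁ k₂ k₃ α₁ α₂ α₃ α₄ : ℝ → ℝ → ℝ)
    (ψ₂ ψ₃ : ℝ → ℝ → ℝ)
    (hγsmooth : ContDiff ℝ (⊤ : ℕ∞) (fun p : ℝ × ℝ => γ p.1 p.2))
    (hTsmooth : ContDiff ℝ (⊤ : ℕ∞) (fun p : ℝ × ℝ => T p.1 p.2))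
    (hNsmooth : ContDiff ℝ (⊤ : ℕ∞) (fun p : ℝ × ℝ => N p.1 p.2))
    (hB₁smooth : ContDiff ℝ (⊤ : ℕ∞) (fun p : ℝ × ℝ => B₁ p.1 p.2))
    (hB₂smooth : ContDiff ℝ (⊤ : ℕ∞) (fun p : ℝ × ℝ => B₂ p.1 p.2))
    (hk₂smooth : ContDiff ℝ (⊤ : ℕ∞) (fun p : ℝ × ℝ => k₂ p.1 p.2))
    (hk₃smooth : ContDiff ℝ (⊤ : ℕ∞) (fun p : ℝ × ℝ => k₃ p.1 p.2))
    (hα₁smooth : ContDiff ℝ (⊤ : ℕ∞) (fun p : ℝ × ℝ => α₁ p.1 p.2))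
    (hα₂smooth : ContDiff ℝ (⊤ : ℕ∞) (fun p : ℝ × ℝ => α₂ p.1 p.2))
    (hα₃smooth : ContDiff ℝ (⊤ : ℕ∞) (fun p : ℝ × ℝ => α₃ p.1 p.2))
    (hα₄smooth : ContDiff ℝ (⊤ : ℕ∞) (fun p : ℝ × ℝ => α₄ p.1 p.2))
    (hTT : ∀ s t : ℝ, mink (T s t) (T s t) = 1)
    (hB₁B₁ : ∀ s t : ℝ, mink (B₁ s t) (B₁ s t) = 1)
    (hNN : ∀ s t : ℝ, mink (N s t) (N s t) = 0)
    (hB₂B₂ : ∀ s t : ℝ, mink (B₂ s t) (B₂ s t) = 0)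
    (hNB₂ : ∀ s t : ℝ, mink (N s t) (B₂ s t) = 1)
    (hTN : ∀ s t : ℝ, mink (T s t) (N s t) = 0)
    (hTB₁ : ∀ s t : ℝ, mink (T s t) (B₁ s t) = 0)
    (hTB₂ : ∀ s t : ℝ, mink (T s t) (B₂ s t) = 0)
    (hNB₁ : ∀ s t : ℝ, mink (N s t) (B₁ s t) = 0)
    (hB₁B₂ : ∀ s t : ℝ, mink (B₁ s t) (B₂ s t) = 0)
    -- arclength parametrization and pseudo null Frenet equations (k₁ = 1)
    (hk₁ : ∀ s t : ℝ, k₁ s t = 1)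
    (hT : ∀ s t : ℝ, T s t = deriv (fun x => γ x t) s)
    (hunit : ∀ s t : ℝ, mnorm (deriv (fun x => γ x t) s) = 1)
    (hfr₁ : ∀ s t : ℝ, deriv (fun x => T x t) s = k₁ s t • N s t)
    (hfr₂ : ∀ s t : ℝ, deriv (fun x => N x t) s = k₂ s t • B₁ s t)
    (hfr₃ : ∀ s t : ℝ, deriv (fun x => B₁ x t) s = k₃ s t • N s t - k₂ s t • B₂ s t)
    (hfr₄ : ∀ s t : ℝ, deriv (fun x => B₂ x t) s = -(k₁ s t) • T s t - k₃ s t • B₁ s t)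
    (hflow : ∀ s t : ℝ, deriv (fun x => γ s x) t =
      α₁ s t • T s t + α₂ s t • N s t + α₃ s t • B₁ s t + α₄ s t • B₂ s t)
    -- inextensibility: ∂α₁/∂s = α₄
    (hinext : ∀ s t : ℝ, deriv (fun x => α₁ x t) s = α₄ s t)
    (hψ₂ : ∀ s t : ℝ, ψ₂ s t = mink (deriv (fun x => N s x) t) (B₂ s t))
    (hψ₃ : ∀ s t : ℝ, ψ₃ s t = mink (deriv (fun x => B₁ s x) t) (B₂ s t)) :
    ∀ s t : ℝ, deriv (fun x => k₃ s x) t =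
      deriv (fun x => ψ₃ x t) s - deriv (fun x => α₃ x t) s - α₂ s t * k₂ s t +
      α₄ s t * k₃ s t - ψ₂ s t * k₃ s t :=
  curvature_evolution_k3_pseudo_null_general γ T N B₁ B₂ k₁ k₂ k₃ α₁ α₂ α₃ α₄ ψ₂ ψ₃ hγsmooth
    hTsmooth hNsmooth hB₁smooth hB₂smooth hα₁smooth hα₂smooth hα₃smooth hα₄smooth hB₁B₁ hB₂B₂ hNB₂
    hTB₁ hNB₁ hB₁B₂ hk₁ hT hfr₁ hfr₂ hfr₃ hfr₄ hflow hψ₂ hψ₃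
end
end
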